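/- arXiv:1510.02702 — 2 statements merged into one kernel-verified Lean document; each statement's English description precedes it below -/
import Mathlib

section
/- Under assumptions A.1 and A.2, for every bounded measurable b : S → ℝ and every 0 < υ < 1/2 there exists a nonnegative, almost surely finite random variable U_{υ,b}, independent of M and ε, such that almost surely, for all M ≥ 1, | (bg^ε, q^M) − (bg, q) | ≤ ‖b‖_∞ ε + U_{υ,b} / M^{1/2 − υ}. -/
/-!
The error splits into `M⁻¹ ∑ b (θᵢ) (gε - g)(θᵢ)`, at most `F ε` by A.1, plus `M⁻¹ T_M`, where
`T_M = ∑_{i<M} (b g (θᵢ) - (bg, q))` is a sum of independent centred variables bounded by `F a`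
(A.2). By Hoeffding, `P(|T_M| ≥ M^(1/2+υ)) ≤ 2 exp(-C M^(2υ))`, which is summable in `M`, so by
Borel–Cantelli almost surely `|T_M| < M^(1/2+υ)` for all large `M`. Hence
`U = sup_M |T_M| / M^(1/2+υ)` is almost surely finite and `|T_M| / M ≤ U / M^(1/2-υ)`.
-/

open MeasureTheory ProbabilityTheory Finset Real Filter
open scoped NNReal ENNReal

lemma ProbabilityTheory.HasSubgaussianMGF.mono {Ω : Type*} [MeasurableSpace Ω] {P : Measure Ω}
    {X : Ω → ℝ} {c d : ℝ≥0} (h : HasSubgaussianMGF X c P) (hcd : c ≤ d) :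
    HasSubgaussianMGF X d P where
  integrable_exp_mul := h.integrable_exp_mul
  mgf_le t := (h.mgf_le t).trans (exp_le_exp.mpr (by gcongr))

lemma neg_rpow_half_add_sq_div_eq (n : ℕ) (c : ℝ) {υ : ℝ} (hυ : 0 < υ) :
    -((n : ℝ) ^ (1 / 2 + υ)) ^ 2 / (2 * n * c) = -(2 * c)⁻¹ * (n : ℝ) ^ (2 * υ) := by
  rcases n.eq_zero_or_pos with rfl | hn
  · simp [zero_rpow (by positivity : 2 * υ ≠ 0)]
  · have hn' : (0 : ℝ) < n := by exact_mod_cast hn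
    rw [← rpow_natCast, ← rpow_mul hn'.le, show (1 / 2 + υ) * ((2 : ℕ) : ℝ) = 1 + 2 * υ by
      push_cast; ring, rpow_add hn', rpow_one]
    field_simp

lemma summable_exp_neg_mul_rpow {a p : ℝ} (ha : 0 < a) (hp : 0 < p) :
    Summable fun n : ℕ ↦ exp (-a * (n : ℝ) ^ p) := by
  have hpow : Tendsto (fun n : ℕ ↦ (n : ℝ) ^ p) atTop atTop :=
    (tendsto_rpow_atTop hp).comp tendsto_natCast_atTop_atTop
  refine summable_of_isBigO_nat (Real.summable_nat_rpow.mpr (by norm_num : (-2 : ℝ) < -1)) ?_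
  have := ((isLittleO_exp_neg_mul_rpow_atTop ha (-2 / p)).comp_tendsto hpow).isBigO
  refine this.congr' (Eventually.of_forall fun _ ↦ rfl) ?_
  filter_upwards [eventually_ge_atTop 0] with n _
  simp only [Function.comp_apply]
  rw [← rpow_mul (Nat.cast_nonneg _), mul_div_cancel₀ _ hp.ne']

section Hoeffding

variable {Ω : Type*} [MeasurableSpace Ω] {P : Measure Ω} {Y : ℕ → Ω → ℝ} {c : ℝ≥0}

lemma measureReal_abs_sum_range_ge_le [IsFiniteMeasure P] (hindep : iIndepFun Y P)
    (hY : ∀ i, HasSubgaussianMGF (Y i) c P) (n : ℕ) {t : ℝ} (ht : 0 ≤ t) :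
    P.real {ω | t ≤ |∑ i ∈ range n, Y i ω|} ≤ 2 * exp (-t ^ 2 / (2 * n * c)) := by
  have hneg : iIndepFun (fun i ω ↦ -Y i ω) P :=
    hindep.comp (fun _ x ↦ -x) fun _ ↦ measurable_neg
  have hsplit : {ω | t ≤ |∑ i ∈ range n, Y i ω|} ⊆
      {ω | t ≤ ∑ i ∈ range n, Y i ω} ∪ {ω | t ≤ ∑ i ∈ range n, -Y i ω} := by
    intro ω hω
    simpa only [Set.mem_union, Set.mem_ofPred_eq, sum_neg_distrib] using le_abs.mp hω
  calc P.real {ω | t ≤ |∑ i ∈ range n, Y i ω|}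
      ≤ P.real {ω | t ≤ ∑ i ∈ range n, Y i ω} + P.real {ω | t ≤ ∑ i ∈ range n, -Y i ω} :=
        (measureReal_mono hsplit).trans (measureReal_union_le _ _)
    _ ≤ exp (-t ^ 2 / (2 * n * c)) + exp (-t ^ 2 / (2 * n * c)) :=
        add_le_add (HasSubgaussianMGF.measure_sum_range_ge_le_of_iIndepFun hindep
            (fun i _ ↦ hY i) ht)
          (HasSubgaussianMGF.measure_sum_range_ge_le_of_iIndepFun hneg
            (fun i _ ↦ (hY i).neg) ht)
    _ = 2 * exp (-t ^ 2 / (2 * n * c)) := by ring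

lemma ae_eventually_abs_sum_range_lt_rpow [IsFiniteMeasure P] (hindep : iIndepFun Y P)
    (hY : ∀ i, HasSubgaussianMGF (Y i) c P) {υ : ℝ} (hυ : 0 < υ) :
    ∀ᵐ ω ∂P, ∀ᶠ n : ℕ in atTop, |∑ i ∈ range n, Y i ω| < (n : ℝ) ^ (1 / 2 + υ) := by
  -- enlarging the parameter to `c + 1 > 0` keeps the Hoeffding exponent from degenerating
  have hc : (0 : ℝ) < 2 * (c + 1 : ℝ≥0) := by positivity
  have htail (n : ℕ) : P {ω | (n : ℝ) ^ (1 / 2 + υ) ≤ |∑ i ∈ range n, Y i ω|} ≤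
      ENNReal.ofReal (2 * exp (-(2 * (c + 1 : ℝ≥0) : ℝ)⁻¹ * (n : ℝ) ^ (2 * υ))) := by
    rw [← ofReal_measureReal, ← neg_rpow_half_add_sq_div_eq n _ hυ]
    exact ENNReal.ofReal_le_ofReal <| measureReal_abs_sum_range_ge_le hindep
      (fun i ↦ (hY i).mono le_self_add) n (by positivity)
  have hsum : ∑' n : ℕ, P {ω | (n : ℝ) ^ (1 / 2 + υ) ≤ |∑ i ∈ range n, Y i ω|} ≠ ∞ := by
    refine ne_top_of_le_ne_top ?_ (ENNReal.tsum_le_tsum htail)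
    rw [← ENNReal.ofReal_tsum_of_nonneg (fun _ ↦ by positivity)
      ((summable_exp_neg_mul_rpow (inv_pos.mpr hc) (by positivity)).mul_left 2)]
    exact ENNReal.ofReal_ne_top
  filter_upwards [ae_eventually_notMem hsum] with ω hω
  filter_upwards [hω] with n hn
  simpa only [Set.mem_ofPred_eq, not_le] using hn

theorem exists_abs_sum_range_le_mul_rpow [IsFiniteMeasure P] (hmeas : ∀ i, Measurable (Y i))
    (hindep : iIndepFun Y P) (hY : ∀ i, HasSubgaussianMGF (Y i) c P) {υ : ℝ} (hυ : 0 < υ) :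
    ∃ U : Ω → ℝ, Measurable U ∧ (∀ ω, 0 ≤ U ω) ∧
      ∀ᵐ ω ∂P, ∀ n : ℕ, |∑ i ∈ range n, Y i ω| ≤ U ω * (n : ℝ) ^ (1 / 2 + υ) := by
  -- a real `⨆` of an unbounded family is `0`: `U` is only meaningful on the event below
  set R : ℕ → Ω → ℝ := fun n ω ↦ |∑ i ∈ range n, Y i ω| / (n : ℝ) ^ (1 / 2 + υ)
  refine ⟨fun ω ↦ ⨆ n, R n ω, Measurable.iSup fun n ↦ ?_,
    fun ω ↦ Real.iSup_nonneg fun n ↦ by positivity, ?_⟩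
  · exact (Finset.measurable_sum _ fun i _ ↦ hmeas i).abs.div_const _
  filter_upwards [ae_eventually_abs_sum_range_lt_rpow hindep hY hυ] with ω hω n
  have hbdd : BddAbove (Set.range fun n ↦ R n ω) := by
    refine IsBoundedUnder.bddAbove_range (isBoundedUnder_of_eventually_le (a := 1) ?_)
    filter_upwards [hω] with n hn using div_le_one_of_le₀ hn.le (by positivity)
  rcases n.eq_zero_or_pos with rfl | hn
  · simp only [range_zero, sum_empty, abs_zero, Nat.cast_zero,
      zero_rpow (by positivity : 1 / 2 + υ ≠ 0), mul_zero, le_refl]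
  · rw [← div_le_iff₀ (by positivity)]
    exact le_ciSup hbdd n

end Hoeffding

section Sampling

variable {Ω E : Type*} [MeasurableSpace Ω] [MeasurableSpace E] {P : Measure Ω} {ν : Measure E}
  {S : Set E} {X : Ω → E}

lemma ae_mem_of_map_eq_withDensity_restrict (hS : MeasurableSet S) (hX : AEMeasurable X P)
    {f : E → ℝ≥0∞} (hlaw : P.map X = (ν.restrict S).withDensity f) : ∀ᵐ ω ∂P, X ω ∈ S := by
  refine ae_of_ae_map hX ?_
  rw [hlaw]
  exact (withDensity_absolutelyContinuous _ _).ae_le (ae_restrict_mem hS)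

lemma integral_comp_eq_setIntegral_mul (hS : MeasurableSet S) {q : E → ℝ} (hq : Measurable q)
    (hq0 : ∀ x ∈ S, 0 ≤ q x) (hX : AEMeasurable X P)
    (hlaw : P.map X = (ν.restrict S).withDensity fun x ↦ ENNReal.ofReal (q x))
    {f : E → ℝ} (hf : Measurable f) : ∫ ω, f (X ω) ∂P = ∫ x in S, f x * q x ∂ν := by
  rw [← integral_map hX hf.aestronglyMeasurable, hlaw,
    integral_withDensity_eq_integral_toReal_smul hq.ennreal_ofReal
      (ae_of_all _ fun _ ↦ ENNReal.ofReal_lt_top)]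
  refine setIntegral_congr_fun hS fun x hx ↦ ?_
  rw [ENNReal.toReal_ofReal (hq0 x hx), smul_eq_mul, mul_comm]

end Sampling

lemma abs_inv_mul_sum_range_le {x : ℕ → ℝ} {r : ℝ} {M : ℕ} (hM : 0 < M)
    (hx : ∀ i < M, |x i| ≤ r) : |(M : ℝ)⁻¹ * ∑ i ∈ range M, x i| ≤ r := by
  have hM' : (0 : ℝ) < M := by exact_mod_cast hM
  rw [abs_mul, abs_inv, Nat.abs_cast, inv_mul_le_iff₀ hM']
  calc |∑ i ∈ range M, x i| ≤ ∑ i ∈ range M, |x i| := abs_sum_le_sum_abs _ _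
    _ ≤ ∑ _i ∈ range M, r := sum_le_sum fun i hi ↦ hx i (mem_range.mp hi)
    _ = M * r := by rw [sum_const, card_range, nsmul_eq_mul]

lemma abs_inv_mul_sum_range_sub_le {x y : ℕ → ℝ} {m r U υ : ℝ} {M : ℕ} (hM : 1 ≤ M)
    (hxy : ∀ i < M, |x i - y i| ≤ r)
    (hy : |∑ i ∈ range M, (y i - m)| ≤ U * (M : ℝ) ^ (1 / 2 + υ)) :
    |(M : ℝ)⁻¹ * ∑ i ∈ range M, x i - m| ≤ r + U / (M : ℝ) ^ (1 / 2 - υ) := by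
  have hM' : (0 : ℝ) < M := by exact_mod_cast hM
  have hsplit : (M : ℝ)⁻¹ * ∑ i ∈ range M, x i - m =
      (M : ℝ)⁻¹ * ∑ i ∈ range M, (x i - y i) + (M : ℝ)⁻¹ * ∑ i ∈ range M, (y i - m) := by
    simp only [sum_sub_distrib, sum_const, card_range, nsmul_eq_mul]
    field_simp
    ring
  have hrate : (M : ℝ)⁻¹ * (U * (M : ℝ) ^ (1 / 2 + υ)) = U / (M : ℝ) ^ (1 / 2 - υ) := by
    rw [show (M : ℝ)⁻¹ * (U * (M : ℝ) ^ (1 / 2 + υ)) = U * ((M : ℝ) ^ (1 / 2 + υ) / M) by ring,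
      ← rpow_sub_one hM'.ne', show 1 / 2 + υ - 1 = -(1 / 2 - υ) by ring, rpow_neg hM'.le]
    exact (div_eq_mul_inv _ _).symm
  calc |(M : ℝ)⁻¹ * ∑ i ∈ range M, x i - m|
      ≤ |(M : ℝ)⁻¹ * ∑ i ∈ range M, (x i - y i)| + |(M : ℝ)⁻¹ * ∑ i ∈ range M, (y i - m)| := by
        rw [hsplit]; exact abs_add_le _ _
    _ ≤ r + U / (M : ℝ) ^ (1 / 2 - υ) := by
        gcongr
        · exact abs_inv_mul_sum_range_le hM hxy
        · rw [abs_mul, abs_inv, Nat.abs_cast, ← hrate]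
          gcongr

theorem approximate_weight_as_bound_general {K : ℕ} {Ω : Type*} [MeasurableSpace Ω]
    (P : Measure Ω) [IsProbabilityMeasure P]
    (S : Set (Fin K → ℝ)) (hS : MeasurableSet S)
    (q : (Fin K → ℝ) → ℝ) (hq : Measurable q) (hqpos : ∀ θ ∈ S, 0 < q θ)
    (g gε : (Fin K → ℝ) → ℝ) (hg : Measurable g)
    (ε : ℝ)
    (hA1 : ∀ θ ∈ S, |g θ - gε θ| ≤ ε)
    (a : ℝ) (ha : 0 < a) (hA2 : ∀ θ ∈ S, a⁻¹ ≤ g θ ∧ g θ ≤ a)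
    (θs : ℕ → Ω → (Fin K → ℝ)) (hθmeas : ∀ i, Measurable (θs i))
    (hindep : iIndepFun θs P)
    (hlaw : ∀ i, Measure.map (θs i) P =
      (volume.restrict S).withDensity (fun x => ENNReal.ofReal (q x)))
    (b : (Fin K → ℝ) → ℝ) (hb : Measurable b)
    (F : ℝ) (hF : 0 ≤ F) (hbF : ∀ θ ∈ S, |b θ| ≤ F)
    (υ : ℝ) (hυ0 : 0 < υ) :
    ∃ U : Ω → ℝ, Measurable U ∧ (∀ ω, 0 ≤ U ω) ∧
      ∀ᵐ ω ∂P, ∀ M : ℕ, 1 ≤ M →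
        |(M : ℝ)⁻¹ * ∑ i ∈ Finset.range M, b (θs i ω) * gε (θs i ω) -
            ∫ x in S, b x * g x * q x| ≤
          F * ε + U ω / (M : ℝ) ^ ((1 : ℝ) / 2 - υ) := by
  have hbg : Measurable fun θ ↦ b θ * g θ := hb.mul hg
  have hmemS : ∀ᵐ ω ∂P, ∀ i, θs i ω ∈ S := ae_all_iff.mpr fun i ↦
    ae_mem_of_map_eq_withDensity_restrict hS (hθmeas i).aemeasurable (hlaw i)
  have hmean (i : ℕ) : P[fun ω ↦ b (θs i ω) * g (θs i ω)] = ∫ x in S, b x * g x * q x :=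
    integral_comp_eq_setIntegral_mul hS hq (fun θ hθ ↦ (hqpos θ hθ).le)
      (hθmeas i).aemeasurable (hlaw i) hbg
  have hbg_le (θ : Fin K → ℝ) (hθ : θ ∈ S) : |b θ * g θ| ≤ F * a := by
    obtain ⟨hga, hag⟩ := hA2 θ hθ
    rw [abs_mul]
    exact mul_le_mul (hbF θ hθ) (abs_le.mpr ⟨by linarith [inv_pos.mpr ha], hag⟩)
      (abs_nonneg _) hF
  have hsubG (i : ℕ) : HasSubgaussianMGF
      (fun ω ↦ b (θs i ω) * g (θs i ω) - ∫ x in S, b x * g x * q x)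
      ((‖F * a - -(F * a)‖₊ / 2) ^ 2) P := by
    rw [← hmean i]
    refine hasSubgaussianMGF_of_mem_Icc (hbg.comp (hθmeas i)).aemeasurable ?_
    filter_upwards [hmemS] with ω hω using abs_le.mp (hbg_le _ (hω i))
  obtain ⟨U, hU, hU0, hUbd⟩ := exists_abs_sum_range_le_mul_rpow
    (fun i ↦ (hbg.comp (hθmeas i)).sub_const _)
    (hindep.comp _ fun _ ↦ hbg.sub_const _) hsubG hυ0
  refine ⟨U, hU, hU0, ?_⟩
  filter_upwards [hmemS, hUbd] with ω hωS hωU M hM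
  refine abs_inv_mul_sum_range_sub_le hM (fun i _ ↦ ?_) (hωU M)
  rw [Function.comp_apply, ← mul_sub, abs_mul, abs_sub_comm]
  exact mul_le_mul (hbF _ (hωS i)) (hA1 _ (hωS i)) (abs_nonneg _) hF

/-- under A.1 (`sup_{θ∈S} |g − g^ε| ≤ ε`) and A.2
(`a⁻¹ ≤ g ≤ a` on `S`), for every bounded measurable `b` (with `|b| ≤ F` on
`S`) and every `0 < υ < 1/2` there is a nonnegative, almost surely finite
random variable `U_{υ,b}`, independent of `M`, such that almost surely, for
all `M ≥ 1`, `|(bg^ε, q^M) − (bg, q)| ≤ F ε + U_{υ,b} / M^(1/2 − υ)`, where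
the samples `θ^(i)` are i.i.d. with common density `q` on `S`. -/
theorem approximate_weight_as_bound {K : ℕ} {Ω : Type*} [MeasurableSpace Ω]
    (P : Measure Ω) [IsProbabilityMeasure P]
    (S : Set (Fin K → ℝ)) (hS : MeasurableSet S)
    (q : (Fin K → ℝ) → ℝ) (hq : Measurable q) (hqpos : ∀ θ ∈ S, 0 < q θ)
    (hq1 : (∫ θ in S, q θ) = 1)
    (g gε : (Fin K → ℝ) → ℝ) (hg : Measurable g) (hgε : Measurable gε)
    (ε : ℝ) (hε : 0 ≤ ε)
    (hA1 : ∀ θ ∈ S, |g θ - gε θ| ≤ ε)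
    (a : ℝ) (ha : 0 < a) (hA2 : ∀ θ ∈ S, a⁻¹ ≤ g θ ∧ g θ ≤ a)
    (θs : ℕ → Ω → (Fin K → ℝ)) (hθmeas : ∀ i, Measurable (θs i))
    (hindep : iIndepFun θs P)
    (hlaw : ∀ i, Measure.map (θs i) P =
      (volume.restrict S).withDensity (fun x => ENNReal.ofReal (q x)))
    (b : (Fin K → ℝ) → ℝ) (hb : Measurable b)
    (F : ℝ) (hF : 0 ≤ F) (hbF : ∀ θ ∈ S, |b θ| ≤ F)
    (υ : ℝ) (hυ0 : 0 < υ) (hυ : υ < 1 / 2) :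
    ∃ U : Ω → ℝ, Measurable U ∧ (∀ ω, 0 ≤ U ω) ∧
      ∀ᵐ ω ∂P, ∀ M : ℕ, 1 ≤ M →
        |(M : ℝ)⁻¹ * ∑ i ∈ Finset.range M, b (θs i ω) * gε (θs i ω) -
            ∫ x in S, b x * g x * q x| ≤
          F * ε + U ω / (M : ℝ) ^ ((1 : ℝ) / 2 - υ) :=
  approximate_weight_as_bound_general P S hS q hq hqpos g gε hg ε hA1 a ha hA2 θs hθmeas hindep hlaw
    b hb F hF hbF υ hυ0
end

section
/- Let w_1, …, w_M be real numbers with a^{−1} ≤ w_i ≤ a for all i (0 < a < ∞), let 1 ≤ M_T < M, let T be the M_T-th largest value among w_1, …, w_M, and set w̄_i = min(w_i, T). Then for any f_1, …, f_M with |f_i| ≤ F, the self-normalized clipped and unclipped weighted averages satisfy the deterministic bound | Σ_i f_i w̄_i / Σ_j w̄_j − Σ_i f_i w_i / Σ_j w_j | ≤ 2 a² F M_T / M; consequently, if M_T ≤ √M, this difference is at most 2 a² F / √M. -/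
open Finset

/-!
Clipping only changes the weights above `T`, and since `T` is the `M_T`-th largest weight
there are fewer than `M_T` of them, each losing at most `a`; so the total mass `D` removed by
clipping is at most `M_T a`, against a total mass of at least `M a⁻¹`. Writing `A, B` for the
weighted sums and `U ≤ V` for the normalisers,
`A/U - B/V = (A/U)·(V - U)/V - (B - A)/V`, and both terms are at most `F·D/V`.
-/

theorem card_filter_lt_apply_le {β : Type*} [LinearOrder β] {M : ℕ} {w : Fin M → β}
    {σ : Equiv.Perm (Fin M)} (hσ : Antitone (w ∘ σ)) (k : Fin M) :
    #{i | w (σ k) < w i} ≤ k := by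
  calc #{i | w (σ k) < w i} ≤ #(Iio k) := by
        refine card_le_card_of_injOn σ.symm (fun i hi => ?_) σ.symm.injective.injOn
        simp only [coe_filter, mem_univ, true_and, Set.mem_ofPred_eq] at hi
        simp only [coe_Iio, Set.mem_Iio]
        by_contra! hk
        have := hσ hk
        simp only [Function.comp_apply, Equiv.apply_symm_apply] at this
        exact absurd hi (not_lt.2 this)
    _ = k := Fin.card_Iio k

theorem sum_sub_min_le_card_mul {ι : Type*} [Fintype ι] {w : ι → ℝ} {T c : ℝ}
    (hc : ∀ i, w i - T ≤ c) :
    ∑ i, (w i - min (w i) T) ≤ #{i | T < w i} * c := by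
  calc ∑ i, (w i - min (w i) T) ≤ ∑ i, if T < w i then c else 0 := by
        gcongr with i
        split_ifs with h
        · rw [min_eq_right h.le]; exact hc i
        · rw [min_eq_left (not_lt.1 h), sub_self]
    _ = #{i | T < w i} * c := by rw [← sum_filter, sum_const, nsmul_eq_mul]

theorem abs_sum_mul_le_mul_sum {ι : Type*} [Fintype ι] {f g : ι → ℝ} {F : ℝ}
    (hf : ∀ i, |f i| ≤ F) (hg : ∀ i, 0 ≤ g i) :
    |∑ i, f i * g i| ≤ F * ∑ i, g i := by
  rw [mul_sum]
  refine (abs_sum_le_sum_abs _ _).trans (sum_le_sum fun i _ => ?_)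
  rw [abs_mul, abs_of_nonneg (hg i)]
  exact mul_le_mul_of_nonneg_right (hf i) (hg i)

theorem abs_weighted_mean_sub_le {ι : Type*} [Fintype ι] {f u v : ι → ℝ} {F : ℝ}
    (hf : ∀ i, |f i| ≤ F) (hu : ∀ i, 0 ≤ u i) (huv : ∀ i, u i ≤ v i)
    (hu_pos : 0 < ∑ i, u i) :
    |(∑ i, f i * u i) / (∑ i, u i) - (∑ i, f i * v i) / (∑ i, v i)| ≤
      2 * F * ((∑ i, v i - ∑ i, u i) / ∑ i, v i) := by
  set A := ∑ i, f i * u i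
  set B := ∑ i, f i * v i
  set U := ∑ i, u i
  set V := ∑ i, v i
  have hV : 0 < V := hu_pos.trans_le (sum_le_sum fun i _ => huv i)
  have hD : 0 ≤ (V - U) / V := div_nonneg (sub_nonneg.2 (sum_le_sum fun i _ => huv i)) hV.le
  have hA : |A| / U ≤ F := (div_le_iff₀ hu_pos).2 (abs_sum_mul_le_mul_sum hf hu)
  have hBA : |B - A| ≤ F * (V - U) := by
    rw [show B - A = ∑ i, f i * (v i - u i) by simp only [B, A, mul_sub, sum_sub_distrib],
      show V - U = ∑ i, (v i - u i) from (sum_sub_distrib ..).symm]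
    exact abs_sum_mul_le_mul_sum hf fun i => sub_nonneg.2 (huv i)
  calc |A / U - B / V| = |A / U * ((V - U) / V) - (B - A) / V| := by
        congr 1; field_simp; ring
    _ ≤ |A| / U * ((V - U) / V) + |B - A| / V := by
        refine (abs_sub _ _).trans (add_le_add ?_ ?_)
        · rw [abs_mul, abs_div, abs_of_pos hu_pos, abs_of_nonneg hD]
        · rw [abs_div, abs_of_pos hV]
    _ ≤ F * ((V - U) / V) + F * (V - U) / V := by
        gcongr
    _ = 2 * F * ((V - U) / V) := by ring

/-- deterministic bound on the distortion introduced by the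
clipping transformation in a self-normalized importance sampling estimator.
If `a⁻¹ ≤ w_i ≤ a`, `1 ≤ M_T < M`, `T` is the `M_T`-th largest weight,
`w̄_i = min(w_i, T)` and `|f_i| ≤ F`, then
`|Σ f_i w̄_i / Σ w̄_j − Σ f_i w_i / Σ w_j| ≤ 2a²F·M_T/M`, and consequently if
`M_T ≤ √M` this difference is at most `2a²F/√M`. -/
theorem clipped_self_normalized_bound (M MT : ℕ) (hMT2 : MT < M)
    (a F : ℝ) (ha : 0 < a)
    (w f : Fin M → ℝ)
    (hw : ∀ i, a⁻¹ ≤ w i ∧ w i ≤ a)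
    (hf : ∀ i, |f i| ≤ F)
    (σ : Equiv.Perm (Fin M))
    (hσ : ∀ k l : Fin M, k ≤ l → w (σ l) ≤ w (σ k))
    (T : ℝ) (hT : T = w (σ ⟨MT - 1, by omega⟩)) :
    |(∑ i, f i * min (w i) T) / (∑ j, min (w j) T) -
        (∑ i, f i * w i) / (∑ j, w j)| ≤ 2 * a ^ 2 * F * MT / M ∧
    ((MT : ℝ) ≤ Real.sqrt M →
      |(∑ i, f i * min (w i) T) / (∑ j, min (w j) T) -
          (∑ i, f i * w i) / (∑ j, w j)| ≤ 2 * a ^ 2 * F / Real.sqrt M) := by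
  have hM : (0 : ℝ) < M := by exact_mod_cast (by omega : 0 < M)
  have hF : 0 ≤ F := (abs_nonneg _).trans (hf ⟨0, by omega⟩)
  have hT_lo : a⁻¹ ≤ T := hT ▸ (hw _).1
  have hclip_lo : ∀ i, a⁻¹ ≤ min (w i) T := fun i => le_min (hw i).1 hT_lo
  have hmass_lo : M * a⁻¹ ≤ ∑ j, min (w j) T := by
    simpa using sum_le_sum fun i (_ : i ∈ univ) => hclip_lo i
  have hS : M * a⁻¹ ≤ ∑ j, w j := hmass_lo.trans (sum_le_sum fun i _ => min_le_left _ _)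
  have hcard : #{i | T < w i} ≤ MT := by
    have := card_filter_lt_apply_le (fun k l h => hσ k l h) ⟨MT - 1, by omega⟩
    rw [← hT] at this
    exact this.trans (Nat.sub_le MT 1)
  have hD : ∑ j, w j - ∑ j, min (w j) T ≤ MT * a := by
    rw [← sum_sub_distrib]
    refine (sum_sub_min_le_card_mul (c := a) fun i => ?_).trans ?_
    · linarith [(hw i).2, inv_pos.2 ha]
    · gcongr
  have hratio : (∑ j, w j - ∑ j, min (w j) T) / ∑ j, w j ≤ a ^ 2 * MT / M := calc
    _ ≤ MT * a / (M * a⁻¹) := by gcongr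
    _ = a ^ 2 * MT / M := by field_simp
  have hbound := (abs_weighted_mean_sub_le hf (fun i => (inv_pos.2 ha).le.trans (hclip_lo i))
    (fun i => min_le_left _ _) ((by positivity : (0 : ℝ) < M * a⁻¹).trans_le hmass_lo)).trans
    (mul_le_mul_of_nonneg_left hratio (by positivity))
  refine ⟨hbound.trans_eq (by ring), fun hsq => hbound.trans ?_⟩
  have hMT_div : (MT : ℝ) / M ≤ 1 / Real.sqrt M := calc
    (MT : ℝ) / M ≤ Real.sqrt M / M := by gcongr
    _ = 1 / Real.sqrt M := Real.sqrt_div_self'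
  calc 2 * F * (a ^ 2 * MT / M) = 2 * a ^ 2 * F * (MT / M) := by ring
    _ ≤ 2 * a ^ 2 * F * (1 / Real.sqrt M) := by gcongr
    _ = 2 * a ^ 2 * F / Real.sqrt M := by ring
end
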